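/- arXiv:2204.02182 — 2 statements merged into one kernel-verified Lean document; each statement's English description precedes it below -/
import Mathlib

section
/- Let N ≥ 1, T > 0, c ∈ ℂ, and suppose a_j : [0,T) → ℂ and s_j : [0,T) → ℂ³ (j = 1,…,N) are twice differentiable with a_j(t) − a_k(t) ∉ Λ for j ≠ k and all t, solving the elliptic spin Calogero–Moser system: ä_j = −2Σ_{k≠j} (s_j·s_k) ℘₂′(a_j−a_k) and ṡ_j = −2Σ_{k≠j} (s_j∧s_k) ℘₂(a_j−a_k) on [0,T). Let S = Σ_{j=1}^{N} s_j (which is constant), let 𝖲 be the 3×3 complex matrix [[0, −S³, S²],[S³, 0, −S¹],[−S², S¹, 0]] (so that 𝖲x = S∧x), and let R(t) = exp(2c t 𝖲) (matrix exponential). Then the pairs (a_j, R(t)s_j(t)) solve the shifted system: ä_j = −2Σ_{k≠j} (R s_j)·(R s_k) ℘₂′(a_j−a_k) and d/dt(R s_j) = −2Σ_{k≠j} (R s_j)∧(R s_k) (℘₂(a_j−a_k) + c) on [0,T). -/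
open Complex Filter MeasureTheory Finset

noncomputable section

/-- The period lattice with half-periods `ℓ` and `iδ`. -/
def Lambda (ℓ δ : ℝ) : Set ℂ :=
  {z | ∃ n m : ℤ, z = 2 * (n : ℂ) * (ℓ : ℂ) + 2 * (m : ℂ) * ((δ : ℂ) * Complex.I)}

/-- The nonzero lattice points. -/
def latticePts (ℓ δ : ℝ) : Set ℂ := Lambda ℓ δ \ {0}

/-- Weierstrass ℘-function with half-periods `ℓ`, `iδ`. -/
def wP (ℓ δ : ℝ) (z : ℂ) : ℂ :=
  1 / z ^ 2 + ∑' ω : latticePts ℓ δ, (1 / (z - (ω : ℂ)) ^ 2 - 1 / (ω : ℂ) ^ 2)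

/-- Weierstrass ζ-function with half-periods `ℓ`, `iδ`. -/
def wZeta (ℓ δ : ℝ) (z : ℂ) : ℂ :=
  1 / z + ∑' ω : latticePts ℓ δ, (1 / (z - (ω : ℂ)) + 1 / (ω : ℂ) + z / (ω : ℂ) ^ 2)

def zeta2 (ℓ δ : ℝ) (z : ℂ) : ℂ :=
  wZeta ℓ δ z - (wZeta ℓ δ ((δ : ℂ) * Complex.I) / ((δ : ℂ) * Complex.I)) * z

def wp2 (ℓ δ : ℝ) (z : ℂ) : ℂ :=
  wP ℓ δ z + wZeta ℓ δ ((δ : ℂ) * Complex.I) / ((δ : ℂ) * Complex.I)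

def f2 (ℓ δ : ℝ) (z : ℂ) : ℂ := (zeta2 ℓ δ z) ^ 2 - wp2 ℓ δ z

def zeta1 (ℓ δ : ℝ) (z : ℂ) : ℂ :=
  wZeta ℓ δ z - (wZeta ℓ δ (ℓ : ℂ) / (ℓ : ℂ)) * z

/-- Bilinear dot product on `ℂ³` (no conjugation). -/
def dot3 (s t : Fin 3 → ℂ) : ℂ := s 0 * t 0 + s 1 * t 1 + s 2 * t 2

/-- Cross product on `ℂ³`. -/
def cross3 (s t : Fin 3 → ℂ) : Fin 3 → ℂ :=
  ![s 1 * t 2 - s 2 * t 1, s 2 * t 0 - s 0 * t 2, s 0 * t 1 - s 1 * t 0]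

/-- The principal-value integral operator `T`. -/
def pvT (ℓ δ : ℝ) (f : ℝ → Fin 3 → ℂ) (x : ℝ) : Fin 3 → ℂ := fun i =>
  (1 / (Real.pi : ℂ)) * limUnder (nhdsWithin (0 : ℝ) (Set.Ioi 0)) (fun ε : ℝ =>
    ∫ y in {y : ℝ | y ∈ Set.Icc (-ℓ) ℓ ∧ ε ≤ |y - x|},
      zeta1 ℓ δ ((y : ℂ) - (x : ℂ)) * f y i)

/-- The integral operator `T̃`. -/
def tilT (ℓ δ : ℝ) (f : ℝ → Fin 3 → ℂ) (x : ℝ) : Fin 3 → ℂ := fun i =>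
  (1 / (Real.pi : ℂ)) * ∫ y in Set.Icc (-ℓ) ℓ,
      zeta1 ℓ δ ((y : ℂ) - (x : ℂ) + (δ : ℂ) * Complex.I) * f y i

/-!
Because `℘₂` is even and `∧` is antisymmetric, the forces `sⱼ ∧ sₖ ℘₂(aⱼ - aₖ)` cancel in pairs,
so the total spin is conserved and equals `S` on `[0, T)`. Since `𝖲` is skew-symmetric, `R(t)` is a
complex rotation (`Rᵀ R = 1`, `det R = 1`), so it preserves both `·` and `∧`; this settles the
equation for `aⱼ`. Differentiating, `d/dt (R sⱼ) = R (ṡⱼ + 2c S ∧ sⱼ)`, and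
`2c S ∧ sⱼ = -2c Σ_{k≠j} sⱼ ∧ sₖ` is exactly the contribution of the shift `℘₂ ↦ ℘₂ + c`.
-/

open Matrix

lemma Convex.is_const_of_hasDerivWithinAt_zero {𝕜 E : Type*} [RCLike 𝕜] [NormedAddCommGroup E]
    [NormedSpace 𝕜 E] {f : 𝕜 → E} {s : Set 𝕜} {x y : 𝕜} (hs : Convex ℝ s)
    (hf : ∀ x ∈ s, HasDerivWithinAt f 0 s x) (hx : x ∈ s) (hy : y ∈ s) : f x = f y := by
  simpa [sub_eq_zero, eq_comm] using
    norm_image_sub_le_of_norm_hasDerivWithin_le (C := 0) hf (by simp) hs hx hy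

lemma sum_sum_erase_eq_zero_of_antisymm {ι M : Type*} [Fintype ι] [DecidableEq ι]
    [AddCommGroup M] (F : ι → ι → M) (hF : ∀ j k, F k j = -F j k) :
    ∑ j, ∑ k ∈ univ.erase j, F j k = 0 := by
  rw [sum_sigma']
  refine sum_involution (fun p _ => ⟨p.2, p.1⟩) (fun p _ => by rw [hF, neg_add_cancel])
    ?_ ?_ fun p _ => rfl
  · rintro ⟨j, k⟩ hp - h
    simp only [mem_sigma, mem_univ, mem_erase, true_and, Sigma.mk.injEq] at hp h
    exact hp.1 h.1
  · rintro ⟨j, k⟩ hp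
    simpa [eq_comm] using hp

lemma HasDerivWithinAt.mulVec {𝕜 𝔸 : Type*} [NontriviallyNormedField 𝕜] [NormedCommRing 𝔸]
    [NormedAlgebra 𝕜 𝔸] {m n : Type*} [Fintype m] [Fintype n] {A : 𝕜 → Matrix m n 𝔸}
    {A' : Matrix m n 𝔸} {v : 𝕜 → n → 𝔸} {v' : n → 𝔸} {s : Set 𝕜} {τ : 𝕜}
    (hA : ∀ i k, HasDerivWithinAt (fun t => A t i k) (A' i k) s τ)
    (hv : HasDerivWithinAt v v' s τ) :
    HasDerivWithinAt (fun t => A t *ᵥ v t) (A' *ᵥ v τ + A τ *ᵥ v') s τ := by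
  refine hasDerivWithinAt_pi.2 fun i => ?_
  convert HasDerivWithinAt.fun_sum (u := univ) fun k _ =>
    (hA i k).mul (hasDerivWithinAt_pi.1 hv k) using 1
  · rfl
  · rw [Pi.add_apply, sum_add_distrib]; rfl

section MatrixExp

variable {n : Type*} [Fintype n] [DecidableEq n]

lemma transpose_exp_mul_exp_of_transpose_eq_neg {𝔸 : Type*} [NormedCommRing 𝔸]
    [NormedAlgebra ℚ 𝔸] [CompleteSpace 𝔸] {A : Matrix n n 𝔸} (hA : Aᵀ = -A) :
    (NormedSpace.exp A)ᵀ * NormedSpace.exp A = 1 := by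
  rw [← Matrix.exp_transpose, hA, ← Matrix.exp_add_of_commute _ _ (Commute.neg_left (.refl A)),
    neg_add_cancel, NormedSpace.exp_zero]

lemma det_exp_of_transpose_eq_neg {𝕂 : Type*} [NormedField 𝕂] [NormedAlgebra ℚ 𝕂]
    [CompleteSpace 𝕂] {A : Matrix n n 𝕂} (hA : Aᵀ = -A) :
    (NormedSpace.exp A).det = 1 := by
  -- `det (exp B) = ±1` for every skew `B`, and `exp A` is the square of `exp (A / 2)`.
  have hsq : ∀ B : Matrix n n 𝕂, Bᵀ = -B → (NormedSpace.exp B).det ^ 2 = 1 := fun B hB => by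
    have := congrArg det (transpose_exp_mul_exp_of_transpose_eq_neg hB)
    rwa [det_mul, det_transpose, det_one, ← sq] at this
  have hhalf : NormedSpace.exp A = NormedSpace.exp ((1 / 2 : ℚ) • A) ^ 2 := by
    rw [sq, ← Matrix.exp_add_of_commute _ _ (.refl _), ← add_smul]
    norm_num
  rw [hhalf, det_pow, hsq _ (by rw [transpose_smul, hA, smul_neg])]

open scoped Matrix.Norms.Operator in
lemma hasDerivAt_exp_smul_apply (A : Matrix n n ℂ) (κ : ℂ) (τ : ℝ) (i k : n) :
    HasDerivAt (fun t : ℝ => NormedSpace.exp ((κ * t) • A) i k)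
      ((NormedSpace.exp ((κ * τ) • A) * κ • A) i k) τ := by
  have hexp := hasDerivAt_exp_smul_const (𝕂 := ℝ) (κ • A) τ
  simp only [← Complex.coe_smul, smul_smul, mul_comm _ κ] at hexp
  exact (LinearMap.toContinuousLinearMap (entryLinearMap ℝ ℂ i k)).hasFDerivAt.comp_hasDerivAt
    τ hexp

end MatrixExp

section Rotation

variable {R : Type*} [CommRing R]

def crossMatrix (v : Fin 3 → R) : Matrix (Fin 3) (Fin 3) R :=
  Matrix.of ![![0, -v 2, v 1], ![v 2, 0, -v 0], ![-v 1, v 0, 0]]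

lemma crossMatrix_mulVec (v w : Fin 3 → R) : crossMatrix v *ᵥ w = v ⨯₃ w := by
  ext i; fin_cases i <;>
    simp [crossMatrix, cross_apply, mulVec, dotProduct, Fin.sum_univ_three] <;> ring

lemma transpose_crossMatrix (v : Fin 3 → R) : (crossMatrix v)ᵀ = -crossMatrix v := by
  ext i j; fin_cases i <;> fin_cases j <;> simp [crossMatrix]

lemma dotProduct_mulVec_mulVec_of_transpose_mul_self {n : Type*} [Fintype n] [DecidableEq n]
    {M : Matrix n n R} (hM : Mᵀ * M = 1) (x y : n → R) :
    (M *ᵥ x) ⬝ᵥ (M *ᵥ y) = x ⬝ᵥ y := by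
  rw [dotProduct_mulVec, ← mulVec_transpose, mulVec_mulVec, hM, one_mulVec]

lemma transpose_mulVec_cross_mulVec (M : Matrix (Fin 3) (Fin 3) R) (x y : Fin 3 → R) :
    Mᵀ *ᵥ (M *ᵥ x) ⨯₃ (M *ᵥ y) = M.det • x ⨯₃ y := by
  ext i; fin_cases i <;>
    simp [cross_apply, mulVec, dotProduct, det_fin_three, Fin.sum_univ_three] <;> ring

lemma cross_mulVec_mulVec {M : Matrix (Fin 3) (Fin 3) R} (hM : Mᵀ * M = 1) (hdet : M.det = 1)
    (x y : Fin 3 → R) : (M *ᵥ x) ⨯₃ (M *ᵥ y) = M *ᵥ x ⨯₃ y := by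
  calc (M *ᵥ x) ⨯₃ (M *ᵥ y) = (M * Mᵀ) *ᵥ (M *ᵥ x) ⨯₃ (M *ᵥ y) := by
        rw [mul_eq_one_comm.mp hM, one_mulVec]
    _ = M *ᵥ x ⨯₃ y := by rw [← mulVec_mulVec, transpose_mulVec_cross_mulVec, hdet, one_smul]

end Rotation

lemma dot3_eq_dotProduct (s t : Fin 3 → ℂ) : dot3 s t = s ⬝ᵥ t := by
  simp [dot3, dotProduct, Fin.sum_univ_three]

lemma cross3_eq_crossProduct (s t : Fin 3 → ℂ) : cross3 s t = s ⨯₃ t :=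
  (cross_apply s t).symm

section SpinSums

variable {R ι : Type*} [CommRing R] [Fintype ι] [DecidableEq ι]

lemma sum_sum_erase_smul_cross_eq_zero {w : R → R} (hw : w.Even) (a : ι → R)
    (x : ι → Fin 3 → R) : ∑ j, ∑ k ∈ univ.erase j, w (a j - a k) • x j ⨯₃ x k = 0 :=
  sum_sum_erase_eq_zero_of_antisymm _ fun j k => by
    rw [← neg_sub, hw, ← cross_anticomm, smul_neg]

lemma sum_erase_add_smul_cross (w : ι → R) (c : R) (x : ι → Fin 3 → R) (j : ι) :
    ∑ k ∈ univ.erase j, (w k + c) • x j ⨯₃ x k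
      = ∑ k ∈ univ.erase j, w k • x j ⨯₃ x k - c • ((∑ k, x k) ⨯₃ x j) := by
  have hrest : ∑ k ∈ univ.erase j, x j ⨯₃ x k = -((∑ k, x k) ⨯₃ x j) := by
    rw [← map_sum, sum_erase_eq_sub (mem_univ j), map_sub, cross_self, sub_zero, cross_anticomm]
  simp only [add_smul, sum_add_distrib, ← smul_sum, hrest, smul_neg, sub_eq_add_neg]

lemma sum_erase_smul_cross_mulVec {M : Matrix (Fin 3) (Fin 3) R} (hM : Mᵀ * M = 1)
    (hdet : M.det = 1) (w : ι → R) (x : ι → Fin 3 → R) (j : ι) :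
    ∑ k ∈ univ.erase j, w k • (M *ᵥ x j) ⨯₃ (M *ᵥ x k)
      = M *ᵥ ∑ k ∈ univ.erase j, w k • x j ⨯₃ x k := by
  simp only [cross_mulVec_mulVec hM hdet, mulVec_sum, mulVec_smul]

end SpinSums

lemma neg_mem_Lambda_iff {ℓ δ : ℝ} {z : ℂ} : -z ∈ Lambda ℓ δ ↔ z ∈ Lambda ℓ δ := by
  suffices ∀ z, z ∈ Lambda ℓ δ → -z ∈ Lambda ℓ δ from ⟨fun h => neg_neg z ▸ this _ h, this z⟩
  rintro _ ⟨n, m, rfl⟩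
  exact ⟨-n, -m, by push_cast; ring⟩

lemma wP_even (ℓ δ : ℝ) : (wP ℓ δ).Even := fun z => by
  have hneg : ∀ ω : ℂ, ω ∈ latticePts ℓ δ ↔ -ω ∈ latticePts ℓ δ := fun ω => by
    simp [latticePts, neg_mem_Lambda_iff]
  rw [wP, wP, neg_sq, ← (Equiv.subtypeEquiv (Equiv.neg ℂ) hneg).tsum_eq]
  congr 2 with ω
  change 1 / (-z - -(ω : ℂ)) ^ 2 - 1 / (-(ω : ℂ)) ^ 2 = _
  ring

lemma wp2_even (ℓ δ : ℝ) : (wp2 ℓ δ).Even := fun z => by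
  rw [wp2, wp2, wP_even]

theorem rotated_spin_CM_general
    (ℓ δ : ℝ)
    (N : ℕ) (T : ℝ) (hT : 0 < T) (c : ℂ)
    (a : Fin N → ℝ → ℂ) (s : Fin N → ℝ → Fin 3 → ℂ)
    (adot : Fin N → ℝ → ℂ)
    (haddot : ∀ j, ∀ τ ∈ Set.Ico (0:ℝ) T, HasDerivWithinAt (adot j)
      ((-2 : ℂ) * ∑ k ∈ Finset.univ.erase j,
        dot3 (s j τ) (s k τ) * deriv (wp2 ℓ δ) (a j τ - a k τ)) (Set.Ico (0:ℝ) T) τ)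
    (hsdot : ∀ j, ∀ τ ∈ Set.Ico (0:ℝ) T, HasDerivWithinAt (s j)
      ((-2 : ℂ) • ∑ k ∈ Finset.univ.erase j, wp2 ℓ δ (a j τ - a k τ) • cross3 (s j τ) (s k τ))
      (Set.Ico (0:ℝ) T) τ)
    (S : Fin 3 → ℂ) (hS : S = ∑ j : Fin N, s j 0)
    (Smat : Matrix (Fin 3) (Fin 3) ℂ)
    (hSmat : Smat = Matrix.of ![![0, -S 2, S 1], ![S 2, 0, -S 0], ![-S 1, S 0, 0]])
    (R : ℝ → Matrix (Fin 3) (Fin 3) ℂ)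
    (hR : ∀ τ : ℝ, R τ = NormedSpace.exp ((2 * c * (τ : ℂ)) • Smat)) :
    (∀ j, ∀ τ ∈ Set.Ico (0:ℝ) T, HasDerivWithinAt (adot j)
      ((-2 : ℂ) * ∑ k ∈ Finset.univ.erase j,
        dot3 ((R τ).mulVec (s j τ)) ((R τ).mulVec (s k τ)) * deriv (wp2 ℓ δ) (a j τ - a k τ))
      (Set.Ico (0:ℝ) T) τ) ∧
    (∀ j, ∀ τ ∈ Set.Ico (0:ℝ) T, HasDerivWithinAt (fun σ => (R σ).mulVec (s j σ))
      ((-2 : ℂ) • ∑ k ∈ Finset.univ.erase j,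
        (wp2 ℓ δ (a j τ - a k τ) + c) • cross3 ((R τ).mulVec (s j τ)) ((R τ).mulVec (s k τ)))
      (Set.Ico (0:ℝ) T) τ) := by
  simp only [cross3_eq_crossProduct, dot3_eq_dotProduct] at haddot hsdot ⊢
  have hskew (τ : ℝ) : ((2 * c * τ) • Smat)ᵀ = -((2 * c * τ) • Smat) := by
    rw [transpose_smul, hSmat, ← crossMatrix, transpose_crossMatrix, smul_neg]
  have hRT (τ : ℝ) : (R τ)ᵀ * R τ = 1 := hR τ ▸ transpose_exp_mul_exp_of_transpose_eq_neg (hskew τ)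
  have hdet (τ : ℝ) : (R τ).det = 1 := hR τ ▸ det_exp_of_transpose_eq_neg (hskew τ)
  have hspin (τ) (hτ : τ ∈ Set.Ico 0 T) : ∑ j, s j τ = S := by
    refine hS ▸ (convex_Ico 0 T).is_const_of_hasDerivWithinAt_zero (f := fun σ => ∑ j, s j σ)
      (fun σ hσ => ?_) hτ ⟨le_rfl, hT⟩
    refine (HasDerivWithinAt.fun_sum (u := univ) fun j _ => hsdot j σ hσ).congr_deriv ?_
    rw [← smul_sum, sum_sum_erase_smul_cross_eq_zero (wp2_even ℓ δ), smul_zero]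
  refine ⟨fun j τ hτ => ?_, fun j τ hτ => ?_⟩
  · simpa only [dotProduct_mulVec_mulVec_of_transpose_mul_self (hRT τ)] using haddot j τ hτ
  · have hRs := HasDerivWithinAt.mulVec (A := R) (A' := R τ * (2 * c) • Smat) (fun i k => by
      simpa only [hR] using (hasDerivAt_exp_smul_apply Smat (2 * c) τ i k).hasDerivWithinAt)
      (hsdot j τ hτ)
    refine hRs.congr_deriv ?_
    rw [sum_erase_add_smul_cross (fun k => wp2 ℓ δ (a j τ - a k τ)) c (fun k => R τ *ᵥ s k τ),
      sum_erase_smul_cross_mulVec (hRT τ) (hdet τ) _ (fun k => s k τ), ← mulVec_sum,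
      hspin τ hτ, cross_mulVec_mulVec (hRT τ) (hdet τ), ← mulVec_mulVec, smul_mulVec, hSmat,
      ← crossMatrix, crossMatrix_mulVec]
    simp only [mulVec_smul]
    module

/-- Rotating the spins of a solution of the elliptic spin Calogero–Moser system by
`R(t) = exp(2ct𝖲)` yields a solution with the potential shifted by `c`. -/
theorem rotated_spin_CM
    (ℓ δ : ℝ) (hℓ : 0 < ℓ) (hδ : 0 < δ)
    (N : ℕ) (hN : 1 ≤ N) (T : ℝ) (hT : 0 < T) (c : ℂ)
    (a : Fin N → ℝ → ℂ) (s : Fin N → ℝ → Fin 3 → ℂ)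
    (adot : Fin N → ℝ → ℂ)
    (haa : ∀ τ ∈ Set.Ico (0:ℝ) T, ∀ j k : Fin N, j ≠ k → a j τ - a k τ ∉ Lambda ℓ δ)
    (ha : ∀ j, ∀ τ ∈ Set.Ico (0:ℝ) T, HasDerivWithinAt (a j) (adot j τ) (Set.Ico (0:ℝ) T) τ)
    (haddot : ∀ j, ∀ τ ∈ Set.Ico (0:ℝ) T, HasDerivWithinAt (adot j)
      ((-2 : ℂ) * ∑ k ∈ Finset.univ.erase j,
        dot3 (s j τ) (s k τ) * deriv (wp2 ℓ δ) (a j τ - a k τ)) (Set.Ico (0:ℝ) T) τ)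
    (hsdot : ∀ j, ∀ τ ∈ Set.Ico (0:ℝ) T, HasDerivWithinAt (s j)
      ((-2 : ℂ) • ∑ k ∈ Finset.univ.erase j, wp2 ℓ δ (a j τ - a k τ) • cross3 (s j τ) (s k τ))
      (Set.Ico (0:ℝ) T) τ)
    (S : Fin 3 → ℂ) (hS : S = ∑ j : Fin N, s j 0)
    (Smat : Matrix (Fin 3) (Fin 3) ℂ)
    (hSmat : Smat = Matrix.of ![![0, -S 2, S 1], ![S 2, 0, -S 0], ![-S 1, S 0, 0]])
    (R : ℝ → Matrix (Fin 3) (Fin 3) ℂ)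
    (hR : ∀ τ : ℝ, R τ = NormedSpace.exp ((2 * c * (τ : ℂ)) • Smat)) :
    (∀ j, ∀ τ ∈ Set.Ico (0:ℝ) T, HasDerivWithinAt (adot j)
      ((-2 : ℂ) * ∑ k ∈ Finset.univ.erase j,
        dot3 ((R τ).mulVec (s j τ)) ((R τ).mulVec (s k τ)) * deriv (wp2 ℓ δ) (a j τ - a k τ))
      (Set.Ico (0:ℝ) T) τ) ∧
    (∀ j, ∀ τ ∈ Set.Ico (0:ℝ) T, HasDerivWithinAt (fun σ => (R σ).mulVec (s j σ))
      ((-2 : ℂ) • ∑ k ∈ Finset.univ.erase j,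
        (wp2 ℓ δ (a j τ - a k τ) + c) • cross3 ((R τ).mulVec (s j τ)) ((R τ).mulVec (s k τ)))
      (Set.Ico (0:ℝ) T) τ) :=
  rotated_spin_CM_general ℓ δ N T hT c a s adot haddot hsdot S hS Smat hSmat R hR
end
end

section
/- The function f₂ has a removable singularity at z = 0 with limit lim_{z→0} f₂(z) = −3ζ(iδ)/(iδ), and the function h(z) = ζ₂(z)·(f₂(z) + 3ζ(iδ)/(iδ)) − (2/3)·(ζ₂(z)³ + 3(ζ(iδ)/(iδ))ζ₂(z) + (1/2)℘₂′(z)), defined for z ∉ Λ, also has a removable singularity at z = 0; that is, the limit lim_{z→0} h(z) exists in ℂ. -/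
open Complex Filter MeasureTheory Finset

noncomputable section

/-!
Write `ζ(z) = 1/z + T(z)` and `℘(z) = 1/z² + G(z)`. Here `G` is Mathlib's `℘[L - 0]`, analytic at
`0` with `G 0 = 0`, and every term of the tail `T` equals `z² / (ω² (z - ω))`, so `T(z) = O(z²)`
because `∑ ‖ω‖⁻³` converges. With `c = ζ(iδ)/(iδ)` and `u = T - c z` this gives
`ζ₂ = 1/z + u` and `℘₂ = 1/z² + G + c`, with `u z / z → -c`. The poles cancel identically:
`f₂ = 2 u/z + u² - G - c → -3c` and `h = u · (u/z) - G/z + u³/3 - u G - G'/3 → -4 G'(0)/3`.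
-/

open Topology PeriodPair

section Laurent

lemma tendsto_zero_of_tendsto_div_self {f : ℂ → ℂ} {a : ℂ}
    (h : Tendsto (fun z => f z / z) (𝓝[≠] 0) (𝓝 a)) : Tendsto f (𝓝[≠] 0) (𝓝 0) := by
  have hz : Tendsto (fun z : ℂ => z) (𝓝[≠] 0) (𝓝 0) :=
    tendsto_nhdsWithin_of_tendsto_nhds tendsto_id
  refine (zero_mul a ▸ hz.mul h).congr' ?_
  filter_upwards [self_mem_nhdsWithin] with z hz0
  exact mul_div_cancel₀ _ hz0

variable {Z P u G : ℂ → ℂ} {c : ℂ}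

theorem tendsto_sq_sub_of_laurent (hZ : Z = fun z => 1 / z + u z)
    (hP : P = fun z => 1 / z ^ 2 + G z + c)
    (hu : Tendsto (fun z => u z / z) (𝓝[≠] 0) (𝓝 (-c))) (hG : Tendsto G (𝓝[≠] 0) (𝓝 0)) :
    Tendsto (fun z => Z z ^ 2 - P z) (𝓝[≠] 0) (𝓝 (-3 * c)) := by
  subst hZ hP
  have hlim := ((hu.const_mul 2).add ((tendsto_zero_of_tendsto_div_self hu).pow 2)).sub
    (hG.add_const c)
  rw [show 2 * -c + 0 ^ 2 - (0 + c) = -3 * c by ring] at hlim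
  refine hlim.congr' ?_
  filter_upwards [self_mem_nhdsWithin] with z hz0
  field_simp
  ring

theorem tendsto_cubic_of_laurent (hZ : Z = fun z => 1 / z + u z)
    (hP : P = fun z => 1 / z ^ 2 + G z + c)
    (hu : Tendsto (fun z => u z / z) (𝓝[≠] 0) (𝓝 (-c))) (hG : AnalyticAt ℂ G 0) (hG0 : G 0 = 0) :
    Tendsto (fun z => Z z * (Z z ^ 2 - P z + 3 * c)
        - (2 / 3 : ℂ) * (Z z ^ 3 + 3 * c * Z z + (1 / 2 : ℂ) * deriv P z))
      (𝓝[≠] 0) (𝓝 (-(4 / 3) * deriv G 0)) := by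
  have hu0 := tendsto_zero_of_tendsto_div_self hu
  have hG_cont : Tendsto G (𝓝[≠] 0) (𝓝 0) :=
    (hG0 ▸ hG.continuousAt.tendsto).mono_left nhdsWithin_le_nhds
  have hG_slope : Tendsto (fun z => G z / z) (𝓝[≠] 0) (𝓝 (deriv G 0)) := by
    refine hG.differentiableAt.hasDerivAt.tendsto_slope.congr fun z => ?_
    simp [slope_def_field, hG0]
  have hG_deriv : Tendsto (deriv G) (𝓝[≠] 0) (𝓝 (deriv G 0)) :=
    hG.deriv.continuousAt.tendsto.mono_left nhdsWithin_le_nhds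
  have hP_deriv : ∀ᶠ z in 𝓝[≠] 0, deriv P z = -2 / z ^ 3 + deriv G z := by
    filter_upwards [self_mem_nhdsWithin,
      nhdsWithin_le_nhds hG.eventually_analyticAt] with z hz0 hGz
    subst hP
    have h_inv_sq : HasDerivAt (fun w : ℂ => 1 / w ^ 2) (-2 / z ^ 3) z := by
      have hz : z ≠ 0 := hz0
      have h : HasDerivAt (fun w : ℂ => 1 / w ^ 2)
          ((0 * z ^ 2 - 1 * (2 * z ^ 1)) / (z ^ 2) ^ 2) z :=
        (hasDerivAt_const z 1).div (hasDerivAt_pow 2 z) (pow_ne_zero 2 hz)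
      exact h.congr_deriv (by field_simp; ring)
    exact ((h_inv_sq.add hGz.differentiableAt.hasDerivAt).add_const c).deriv
  have hlim := (((((hu0.mul hu).sub hG_slope).add ((hu0.pow 3).div_const 3)).sub
    (hu0.mul hG_cont)).sub (hG_deriv.div_const 3))
  rw [show 0 * -c - deriv G 0 + 0 ^ 3 / 3 - 0 * 0 - deriv G 0 / 3 = -(4 / 3) * deriv G 0 by
    ring] at hlim
  refine hlim.congr' ?_
  filter_upwards [self_mem_nhdsWithin, hP_deriv] with z hz0 hPz
  subst hZ hP
  rw [hPz]
  field_simp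
  ring

end Laurent

section ZetaTail

def zetaTail (S : Set ℂ) (z : ℂ) : ℂ := ∑' ω : S, (1 / (z - ω) + 1 / ω + z / ω ^ 2)

lemma norm_zetaTail_term_le {z ω : ℂ} (hω : ω ≠ 0) (h : 2 * ‖z‖ ≤ ‖ω‖) :
    ‖1 / (z - ω) + 1 / ω + z / ω ^ 2‖ ≤ 2 * ‖z‖ ^ 2 * ‖ω‖ ^ (-3 : ℝ) := by
  have hω_pos : 0 < ‖ω‖ := norm_pos_iff.2 hω
  have h_sub : ‖ω‖ / 2 ≤ ‖z - ω‖ := by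
    have := norm_sub_norm_le ω z
    rw [norm_sub_rev] at this
    linarith
  have hzω : z - ω ≠ 0 := norm_pos_iff.1 (by linarith)
  have h_eq : 1 / (z - ω) + 1 / ω + z / ω ^ 2 = z ^ 2 / (ω ^ 2 * (z - ω)) := by
    field_simp
    ring
  rw [h_eq, norm_div, norm_mul, norm_pow, norm_pow]
  calc ‖z‖ ^ 2 / (‖ω‖ ^ 2 * ‖z - ω‖) ≤ ‖z‖ ^ 2 / (‖ω‖ ^ 2 * (‖ω‖ / 2)) := by gcongr
    _ = 2 * ‖z‖ ^ 2 * ‖ω‖ ^ (-3 : ℝ) := by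
      rw [Real.rpow_neg hω_pos.le]
      norm_cast
      field_simp

theorem tendsto_zetaTail_div_self {S : Set ℂ} {r : ℝ} (hr : 0 < r) (hS : ∀ ω ∈ S, r ≤ ‖ω‖)
    (hsum : Summable fun ω : S => ‖(ω : ℂ)‖ ^ (-3 : ℝ)) :
    Tendsto (fun z => zetaTail S z / z) (𝓝[≠] 0) (𝓝 0) := by
  set M := ∑' ω : S, ‖(ω : ℂ)‖ ^ (-3 : ℝ)
  have h_bound : ∀ z : ℂ, 2 * ‖z‖ ≤ r → ‖zetaTail S z‖ ≤ 2 * ‖z‖ ^ 2 * M := fun z hz =>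
    tsum_of_norm_bounded (hsum.hasSum.mul_left (2 * ‖z‖ ^ 2)) fun ω =>
      norm_zetaTail_term_le (norm_pos_iff.1 (hr.trans_le (hS ω ω.2))) (hz.trans (hS ω ω.2))
  have h_lim : Tendsto (fun z : ℂ => 2 * M * ‖z‖) (𝓝[≠] 0) (𝓝 0) := by
    simpa using (tendsto_norm_zero.mono_left nhdsWithin_le_nhds).const_mul (2 * M)
  refine squeeze_zero_norm' ?_ h_lim
  filter_upwards [self_mem_nhdsWithin, nhdsWithin_le_nhds (Metric.ball_mem_nhds 0 (half_pos hr))]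
    with z hz0 hz
  have hz_pos : 0 < ‖z‖ := norm_pos_iff.2 hz0
  rw [mem_ball_zero_iff] at hz
  rw [norm_div, div_le_iff₀ hz_pos]
  nlinarith [h_bound z (by linarith)]

end ZetaTail

section Lattice

variable {ℓ δ : ℝ}

def periodPair (hℓ : ℓ ≠ 0) (hδ : δ ≠ 0) : PeriodPair where
  ω₁ := 2 * ℓ
  ω₂ := 2 * (δ * I)
  indep := LinearIndependent.pair_iff.2 fun s t h => by
    have h_re := congrArg re h
    have h_im := congrArg im h
    exact ⟨by simpa [hℓ] using h_re, by simpa [hδ] using h_im⟩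

lemma coe_lattice_periodPair (hℓ : ℓ ≠ 0) (hδ : δ ≠ 0) :
    ((periodPair hℓ hδ).lattice : Set ℂ) = Lambda ℓ δ := by
  ext x
  simp only [SetLike.mem_coe, mem_lattice, Lambda, Set.mem_ofPred_eq, periodPair]
  constructor
  · rintro ⟨m, n, rfl⟩
    exact ⟨m, n, by ring⟩
  · rintro ⟨m, n, rfl⟩
    exact ⟨m, n, by ring⟩

lemma latticePts_eq_lattice_sdiff (hℓ : ℓ ≠ 0) (hδ : δ ≠ 0) :
    latticePts ℓ δ = ((periodPair hℓ hδ).lattice : Set ℂ) \ {0} := by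
  rw [latticePts, coe_lattice_periodPair]

lemma latticePts_subset (hℓ : ℓ ≠ 0) (hδ : δ ≠ 0) :
    latticePts ℓ δ ⊆ (periodPair hℓ hδ).lattice :=
  latticePts_eq_lattice_sdiff hℓ hδ ▸ Set.sdiff_subset

def latticePtsEmbedding (hℓ : ℓ ≠ 0) (hδ : δ ≠ 0) :
    latticePts ℓ δ ↪ (periodPair hℓ hδ).lattice where
  toFun ω := ⟨ω, latticePts_subset hℓ hδ ω.2⟩
  inj' _ _ h := by simpa [Subtype.ext_iff] using h

lemma summable_norm_rpow_latticePts (hℓ : ℓ ≠ 0) (hδ : δ ≠ 0) :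
    Summable fun ω : latticePts ℓ δ => ‖(ω : ℂ)‖ ^ (-3 : ℝ) := by
  have h3 : (-3 : ℝ) < -Module.finrank ℤ (periodPair hℓ hδ).lattice := by
    rw [finrank_lattice]; norm_num
  exact ((ZLattice.summable_norm_rpow _ _ h3).comp_injective
    (latticePtsEmbedding hℓ hδ).injective :)

lemma exists_pos_le_norm_latticePts (hℓ : ℓ ≠ 0) (hδ : δ ≠ 0) :
    ∃ r > 0, ∀ ω ∈ latticePts ℓ δ, r ≤ ‖ω‖ := by
  obtain ⟨r, hr, h_ball⟩ :=
    Metric.mem_nhds_iff.1 ((periodPair hℓ hδ).compl_lattice_sdiff_singleton_mem_nhds 0)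
  refine ⟨r, hr, fun ω hω => ?_⟩
  by_contra! h
  exact h_ball (mem_ball_zero_iff.2 h) (latticePts_eq_lattice_sdiff hℓ hδ ▸ hω)

lemma wP_eq_one_div_sq_add_weierstrassPExcept (hℓ : ℓ ≠ 0) (hδ : δ ≠ 0) :
    wP ℓ δ = fun z => 1 / z ^ 2 + (periodPair hℓ hδ).weierstrassPExcept 0 z := by
  funext z
  rw [wP, weierstrassPExcept, ← (latticePtsEmbedding hℓ hδ).injective.tsum_eq]
  · exact congrArg _ (tsum_congr fun ω => (if_neg ω.2.2).symm)
  · intro l hl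
    have hl0 : (l : ℂ) ≠ 0 := fun h => hl (if_pos h)
    have hmem : (l : ℂ) ∈ latticePts ℓ δ := by
      rw [latticePts_eq_lattice_sdiff hℓ hδ]
      exact ⟨l.2, hl0⟩
    exact ⟨⟨l, hmem⟩, rfl⟩

end Lattice

/-- `f₂` has a removable singularity at `0` with limit `−3ζ(iδ)/(iδ)`, and the
function `h` also has a removable singularity at `0`. -/
theorem f2_and_h_removable_singularity
    (ℓ δ : ℝ) (hℓ : 0 < ℓ) (hδ : 0 < δ) :
    Filter.Tendsto (f2 ℓ δ) (nhdsWithin (0 : ℂ) {(0 : ℂ)}ᶜ)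
      (nhds (-3 * wZeta ℓ δ ((δ : ℂ) * Complex.I) / ((δ : ℂ) * Complex.I))) ∧
    ∃ L : ℂ, Filter.Tendsto (fun z : ℂ =>
        zeta2 ℓ δ z * (f2 ℓ δ z + 3 * wZeta ℓ δ ((δ : ℂ) * Complex.I) / ((δ : ℂ) * Complex.I))
          - (2/3 : ℂ) * ((zeta2 ℓ δ z) ^ 3
            + 3 * (wZeta ℓ δ ((δ : ℂ) * Complex.I) / ((δ : ℂ) * Complex.I)) * zeta2 ℓ δ z
            + (1/2 : ℂ) * deriv (wp2 ℓ δ) z))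
      (nhdsWithin (0 : ℂ) {(0 : ℂ)}ᶜ) (nhds L) := by
  simp only [mul_div_assoc]
  set c := wZeta ℓ δ (δ * I) / (δ * I)
  set Λ := periodPair hℓ.ne' hδ.ne'
  have hZ : zeta2 ℓ δ = fun z => 1 / z + (zetaTail (latticePts ℓ δ) z - c * z) := by
    funext z
    rw [zeta2, wZeta, ← zetaTail, add_sub_assoc]
  have hP : wp2 ℓ δ = fun z => 1 / z ^ 2 + Λ.weierstrassPExcept 0 z + c := by
    funext z
    rw [wp2, wP_eq_one_div_sq_add_weierstrassPExcept hℓ.ne' hδ.ne']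
  obtain ⟨r, hr, h_norm⟩ := exists_pos_le_norm_latticePts hℓ.ne' hδ.ne'
  have hu : Tendsto (fun z => (zetaTail (latticePts ℓ δ) z - c * z) / z) (𝓝[≠] 0) (𝓝 (-c)) := by
    have h := (tendsto_zetaTail_div_self hr h_norm
      (summable_norm_rpow_latticePts hℓ.ne' hδ.ne')).sub_const c
    rw [zero_sub] at h
    refine h.congr' ?_
    filter_upwards [self_mem_nhdsWithin] with z hz
    rw [sub_div, mul_div_cancel_right₀ _ hz]
  have hG := Λ.analyticAt_weierstrassPExcept 0
  have hG0 := Λ.weierstrassPExcept_zero 0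
  exact ⟨tendsto_sq_sub_of_laurent hZ hP hu
      ((hG0 ▸ hG.continuousAt.tendsto).mono_left nhdsWithin_le_nhds),
    _, tendsto_cubic_of_laurent hZ hP hu hG hG0⟩

end
end
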